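/- arXiv:2103.02806 — 7 statements merged into one kernel-verified Lean document; each statement's English description precedes it below -/
import Mathlib

section
/- Let η, ζ > 0 be reals with ζ > η, and let s, u, v, ḡ, p̄ be reals with u ≥ 0, v ≥ 0, ḡ ≥ 0, p̄ ≥ 0. Suppose there exist g, p with 0 ≤ g ≤ ḡ, 0 ≤ p ≤ p̄, g·p = 0, s + u = η·g - ζ·p, and s - v ≥ -ζ·p̄. If g = 0, define g' = 0 and p'(ρᵘ, ρᵛ) = -(s + ρᵘu - ρᵛv)/ζ for (ρᵘ, ρᵛ) ∈ {(0,0),(1,0),(0,1)}. Then for each such activation pair: 0 ≤ p'(ρᵘ,ρᵛ) ≤ p̄, η·g' - ζ·p'(ρᵘ,ρᵛ) = s + ρᵘu - ρᵛv, and g' - p'(ρᵘ,ρᵛ) ≤ g - p. -/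
/-!
With `g = 0` the delivery equation reads `s + u = -ζ p ≤ 0`. Every activation pair shifts the
spot bid by an amount `w = ρᵘu - ρᵛv ∈ [-v, u]`, so `s + w` lies between `s - v ≥ -ζ p̄` and
`s + u ≤ 0`; dividing by `-ζ` gives `0 ≤ p' ≤ p̄`, and `w ≤ u` gives `p ≤ p'`.
-/

lemma activation_adjustment_mem_Icc {ρu ρv u v : ℝ}
    (hρ : (ρu, ρv) ∈ ({(0, 0), (1, 0), (0, 1)} : Set (ℝ × ℝ))) (hu : 0 ≤ u) (hv : 0 ≤ v) :
    -v ≤ ρu * u - ρv * v ∧ ρu * u - ρv * v ≤ u := by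
  simp only [Set.mem_insert_iff, Set.mem_singleton_iff, Prod.mk.injEq] at hρ
  rcases hρ with ⟨rfl, rfl⟩ | ⟨rfl, rfl⟩ | ⟨rfl, rfl⟩ <;> constructor <;> linarith

theorem stmt3_general (η ζ s u v pbar g p : ℝ)
    (hη : 0 < η) (hζη : η < ζ)
    (hu : 0 ≤ u) (hv : 0 ≤ v)
    (hp : 0 ≤ p)
    (hdel : s + u = η * g - ζ * p) (hcut : s - v ≥ -(ζ * pbar))
    (hg0 : g = 0)
    (ρu ρv : ℝ) (hρ : (ρu, ρv) ∈ ({(0, 0), (1, 0), (0, 1)} : Set (ℝ × ℝ))) :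
    let g' : ℝ := 0
    let p' : ℝ := -(s + ρu * u - ρv * v) / ζ
    0 ≤ p' ∧ p' ≤ pbar ∧ η * g' - ζ * p' = s + ρu * u - ρv * v ∧ g' - p' ≤ g - p := by
  intro g' p'
  subst hg0
  have hζ : 0 < ζ := hη.trans hζη
  obtain ⟨hdown, hup⟩ := activation_adjustment_mem_Icc hρ hu hv
  have hspot : s + u ≤ 0 := by linarith [mul_nonneg hζ.le hp]
  have hp_eq : p = -(s + u) / ζ := by field_simp; linarith
  refine ⟨div_nonneg (by linarith) hζ.le, ?_, ?_, ?_⟩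
  · rw [div_le_iff₀ hζ]
    linarith
  · simp only [g', p']
    field_simp
    ring
  · have hpp' : p ≤ p' := hp_eq ▸ div_le_div_of_nonneg_right (by linarith) hζ.le
    simp only [g']
    linarith

/-- Case 1 (`g = 0`) of the flow-adjustment construction: with `g' = 0` and
`p' = -(s + ρᵘu - ρᵛv)/ζ`, for each activation pair in `{(0,0),(1,0),(0,1)}` we get
`0 ≤ p' ≤ p̄`, exact energy delivery, and `g' - p' ≤ g - p`. -/
theorem stmt3 (η ζ s u v gbar pbar g p : ℝ)
    (hη : 0 < η) (hζη : η < ζ)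
    (hu : 0 ≤ u) (hv : 0 ≤ v) (hgbar : 0 ≤ gbar) (hpbar : 0 ≤ pbar)
    (hg : 0 ≤ g) (hgub : g ≤ gbar) (hp : 0 ≤ p) (hpub : p ≤ pbar)
    (hcomp : g * p = 0) (hdel : s + u = η * g - ζ * p) (hcut : s - v ≥ -(ζ * pbar))
    (hg0 : g = 0)
    (ρu ρv : ℝ) (hρ : (ρu, ρv) ∈ ({(0, 0), (1, 0), (0, 1)} : Set (ℝ × ℝ))) :
    let g' : ℝ := 0
    let p' : ℝ := -(s + ρu * u - ρv * v) / ζ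
    0 ≤ p' ∧ p' ≤ pbar ∧ η * g' - ζ * p' = s + ρu * u - ρv * v ∧ g' - p' ≤ g - p :=
  stmt3_general η ζ s u v pbar g p hη hζη hu hv hp hdel hcut hg0 ρu ρv hρ
end

section
/- Let η, ζ > 0 be reals with ζ > η, and let s, u, v, ḡ, p̄ be reals with u, v, ḡ, p̄ ≥ 0. Suppose there exist g, p with 0 < g ≤ ḡ, p = 0, s + u = η·g, and s - v ≥ -ζ·p̄. For (ρᵘ, ρᵛ) ∈ {(0,0),(1,0),(0,1)}, define y = s + ρᵘu - ρᵛv, g' = max(y,0)/η, and p' = max(-y,0)/ζ. Then 0 ≤ g' ≤ ḡ, 0 ≤ p' ≤ p̄, η·g' - ζ·p' = y, and g' - p' ≤ g - p. -/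
lemma max_zero_div_le {y c b : ℝ} (hc : 0 < c) (hb : 0 ≤ b) (h : y ≤ c * b) :
    max y 0 / c ≤ b := by
  rw [div_le_iff₀ hc, mul_comm]
  exact max_le h (by positivity)

lemma mul_max_zero_div_sub_mul_max_neg_zero_div {η ζ : ℝ} (hη : η ≠ 0) (hζ : ζ ≠ 0) (y : ℝ) :
    η * (max y 0 / η) - ζ * (max (-y) 0 / ζ) = y := by
  rw [mul_div_cancel₀ _ hη, mul_div_cancel₀ _ hζ, max_zero_sub_max_neg_zero_eq_self]

lemma mem_Icc_of_mem_activations {ρu ρv : ℝ}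
    (hρ : (ρu, ρv) ∈ ({(0, 0), (1, 0), (0, 1)} : Set (ℝ × ℝ))) :
    ρu ∈ Set.Icc (0 : ℝ) 1 ∧ ρv ∈ Set.Icc (0 : ℝ) 1 := by
  simp only [Set.mem_insert_iff, Set.mem_singleton_iff, Prod.mk.injEq] at hρ
  rcases hρ with ⟨rfl, rfl⟩ | ⟨rfl, rfl⟩ | ⟨rfl, rfl⟩ <;> norm_num

section Activation

variable {s u v ρu ρv : ℝ}

lemma add_mul_sub_mul_le_add (hu : 0 ≤ u) (hv : 0 ≤ v) (hρu : ρu ≤ 1) (hρv : 0 ≤ ρv) :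
    s + ρu * u - ρv * v ≤ s + u := by
  have : ρu * u ≤ u := mul_le_of_le_one_left hu hρu
  have : 0 ≤ ρv * v := mul_nonneg hρv hv
  linarith

lemma sub_le_add_mul_sub_mul (hu : 0 ≤ u) (hv : 0 ≤ v) (hρu : 0 ≤ ρu) (hρv : ρv ≤ 1) :
    s - v ≤ s + ρu * u - ρv * v := by
  have : 0 ≤ ρu * u := mul_nonneg hρu hu
  have : ρv * v ≤ v := mul_le_of_le_one_left hv hρv
  linarith

end Activation

theorem stmt4_general (η ζ s u v gbar pbar g p : ℝ)
    (hη : 0 < η) (hζη : η < ζ)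
    (hu : 0 ≤ u) (hv : 0 ≤ v) (hpbar : 0 ≤ pbar)
    (hg : 0 < g) (hgub : g ≤ gbar) (hp : p = 0)
    (hdel : s + u = η * g) (hcut : s - v ≥ -(ζ * pbar))
    (ρu ρv : ℝ) (hρ : (ρu, ρv) ∈ ({(0, 0), (1, 0), (0, 1)} : Set (ℝ × ℝ))) :
    let y : ℝ := s + ρu * u - ρv * v
    let g' : ℝ := max y 0 / η
    let p' : ℝ := max (-y) 0 / ζ
    0 ≤ g' ∧ g' ≤ gbar ∧ 0 ≤ p' ∧ p' ≤ pbar ∧ η * g' - ζ * p' = y ∧ g' - p' ≤ g - p := by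
  intro y g' p'
  have hζ : 0 < ζ := hη.trans hζη
  obtain ⟨⟨hρu₀, hρu₁⟩, ⟨hρv₀, hρv₁⟩⟩ := mem_Icc_of_mem_activations hρ
  have hy_le : y ≤ η * g := hdel ▸ add_mul_sub_mul_le_add hu hv hρu₁ hρv₀
  have hy_ge : -y ≤ ζ * pbar := by
    linarith [sub_le_add_mul_sub_mul (s := s) hu hv hρu₀ hρv₁]
  have hg'0 : 0 ≤ g' := by positivity
  have hp'0 : 0 ≤ p' := by positivity
  have hg'g : g' ≤ g := max_zero_div_le hη hg.le hy_le
  refine ⟨hg'0, hg'g.trans hgub, hp'0, max_zero_div_le hζ hpbar hy_ge,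
    mul_max_zero_div_sub_mul_max_neg_zero_div hη.ne' hζ.ne' y, ?_⟩
  rw [hp, sub_zero]
  exact (sub_le_self _ hp'0).trans hg'g

/-- Case 2 (`g > 0`, hence `p = 0`) of the flow-adjustment construction: with
`y = s + ρᵘu - ρᵛv`, `g' = y⁺/η` and `p' = y⁻/ζ`, for each activation pair in
`{(0,0),(1,0),(0,1)}` the adjusted flows stay within bounds, deliver exactly `y`,
and satisfy `g' - p' ≤ g - p`. -/
theorem stmt4 (η ζ s u v gbar pbar g p : ℝ)
    (hη : 0 < η) (hζη : η < ζ)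
    (hu : 0 ≤ u) (hv : 0 ≤ v) (hgbar : 0 ≤ gbar) (hpbar : 0 ≤ pbar)
    (hg : 0 < g) (hgub : g ≤ gbar) (hp : p = 0)
    (hdel : s + u = η * g) (hcut : s - v ≥ -(ζ * pbar))
    (ρu ρv : ℝ) (hρ : (ρu, ρv) ∈ ({(0, 0), (1, 0), (0, 1)} : Set (ℝ × ℝ))) :
    let y : ℝ := s + ρu * u - ρv * v
    let g' : ℝ := max y 0 / η
    let p' : ℝ := max (-y) 0 / ζ
    0 ≤ g' ∧ g' ≤ gbar ∧ 0 ≤ p' ∧ p' ≤ pbar ∧ η * g' - ζ * p' = y ∧ g' - p' ≤ g - p :=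
  stmt4_general η ζ s u v gbar pbar g p hη hζη hu hv hpbar hg hgub hp hdel hcut ρu ρv hρ
end

section
/- Consider the linear program (D): maximize α·s + β·u + γ·v + λᵀ(η∘g - ζ∘p) - μᵀ(ζ∘p̄) over α, β, γ ∈ R, λ ∈ R^A, μ ∈ R^A with μ ≥ 0, subject to α·1 + λ + μ = 0, β·1 + λ ≤ 0, and γ·1 - μ ≤ 0, where the data satisfy: g, p, p̄, η, ζ ∈ R^A with 0 ≤ g, 0 ≤ p ≤ p̄, η ≥ 0, ζ ≥ 0; u ≥ 0, v ≥ 0, s + u = ηᵀg - ζᵀp, and s - v ≥ -ζᵀp̄. Then the optimal value of (D) is 0, i.e., every feasible solution has objective value at most 0, and 0 is attained (at the origin). -/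
/-!
Eliminating `λ` through the equality constraint and `s` through the balance equation turns the
objective into `(β - α) u + γ v - ∑ μₐ Kₐ`, where `Kₐ = (ηₐ gₐ - ζₐ pₐ) + ζₐ p̄ₐ ≥ 0`.
The constraints give `β - α ≤ μₐ` and `γ ≤ μₐ`, so with `m = max (β - α, γ, 0)` the objective is at
most `m (u + v - ∑ Kₐ)`, and the cut constraint says exactly that `u + v ≤ ∑ Kₐ`.
-/

open Finset

section DualBound

variable {ι : Type*} [Fintype ι] (c d lam μ : ι → ℝ) {α β γ s u v : ℝ}

theorem dual_objective_eq (hα : ∀ a, α + lam a + μ a = 0) (hsum : s + u = ∑ a, c a) :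
    α * s + β * u + γ * v + ∑ a, lam a * c a - ∑ a, μ a * d a
      = (β - α) * u + γ * v - ∑ a, μ a * (c a + d a) := by
  have hlam : ∀ a, lam a = -α - μ a := fun a => by linarith [hα a]
  simp only [hlam, sub_mul, neg_mul, sum_sub_distrib, sum_neg_distrib, ← mul_sum, mul_add,
    sum_add_distrib]
  rw [← hsum]
  ring

theorem dual_objective_nonpos (hμ : 0 ≤ μ) (hcd : ∀ a, 0 ≤ c a + d a) (hu : 0 ≤ u) (hv : 0 ≤ v)
    (hsum : s + u = ∑ a, c a) (hcut : -∑ a, d a ≤ s - v)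
    (hα : ∀ a, α + lam a + μ a = 0) (hβ : ∀ a, β + lam a ≤ 0) (hγ : ∀ a, γ - μ a ≤ 0) :
    α * s + β * u + γ * v + ∑ a, lam a * c a - ∑ a, μ a * d a ≤ 0 := by
  rw [dual_objective_eq c d lam μ hα hsum]
  set m := max (max (β - α) γ) 0
  have hm_le : ∀ a, m ≤ μ a := fun a =>
    max_le (max_le (by linarith [hα a, hβ a]) (by linarith [hγ a])) (hμ a)
  have hβα : (β - α) * u ≤ m * u :=
    mul_le_mul_of_nonneg_right ((le_max_left _ _).trans (le_max_left _ _)) hu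
  have hγm : γ * v ≤ m * v :=
    mul_le_mul_of_nonneg_right ((le_max_right _ _).trans (le_max_left _ _)) hv
  have hmK : m * ∑ a, (c a + d a) ≤ ∑ a, μ a * (c a + d a) := by
    rw [mul_sum]
    exact sum_le_sum fun a _ => mul_le_mul_of_nonneg_right (hm_le a) (hcd a)
  have huv : u + v ≤ ∑ a, (c a + d a) := by
    rw [sum_add_distrib]
    linarith
  calc (β - α) * u + γ * v - ∑ a, μ a * (c a + d a)
      ≤ m * (u + v - ∑ a, (c a + d a)) := by linarith
    _ ≤ 0 := mul_nonpos_of_nonneg_of_nonpos (le_max_right _ _) (by linarith)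

end DualBound

theorem stmt6_general (A : ℕ) (g p pbar η ζ : Fin A → ℝ) (s u v : ℝ)
    (hg : 0 ≤ g) (hpub : p ≤ pbar) (hη : 0 ≤ η) (hζ : 0 ≤ ζ)
    (hu : 0 ≤ u) (hv : 0 ≤ v)
    (hdel : s + u = ∑ a, η a * g a - ∑ a, ζ a * p a)
    (hcut : s - v ≥ -∑ a, ζ a * pbar a) :
    (∀ (α β γ : ℝ) (lam μ : Fin A → ℝ), 0 ≤ μ →
      (∀ a, α + lam a + μ a = 0) → (∀ a, β + lam a ≤ 0) → (∀ a, γ - μ a ≤ 0) →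
      α * s + β * u + γ * v + (∑ a, lam a * (η a * g a - ζ a * p a))
        - ∑ a, μ a * (ζ a * pbar a) ≤ 0) ∧
    (∃ (α β γ : ℝ) (lam μ : Fin A → ℝ), 0 ≤ μ ∧
      (∀ a, α + lam a + μ a = 0) ∧ (∀ a, β + lam a ≤ 0) ∧ (∀ a, γ - μ a ≤ 0) ∧
      α * s + β * u + γ * v + (∑ a, lam a * (η a * g a - ζ a * p a))
        - ∑ a, μ a * (ζ a * pbar a) = 0) := by
  refine ⟨fun α β γ lam μ hμ hα hβ hγ => ?_, ⟨0, 0, 0, 0, 0, le_rfl, by simp⟩⟩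
  have hK : ∀ a, 0 ≤ (η a * g a - ζ a * p a) + ζ a * pbar a := fun a => by
    linarith [mul_nonneg (hη a) (hg a), mul_nonneg (hζ a) (sub_nonneg.2 (hpub a))]
  exact dual_objective_nonpos (fun a => η a * g a - ζ a * p a) (fun a => ζ a * pbar a) lam μ
    hμ hK hu hv (by rwa [sum_sub_distrib]) hcut hα hβ hγ

/-- The dual feasibility LP of the bid-disaggregation argument has optimal value 0:
every feasible `(α, β, γ, λ, μ)` has objective value at most 0, and the origin is
feasible with objective value 0. -/
theorem stmt6 (A : ℕ) (g p pbar η ζ : Fin A → ℝ) (s u v : ℝ)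
    (hg : 0 ≤ g) (hp : 0 ≤ p) (hpub : p ≤ pbar) (hη : 0 ≤ η) (hζ : 0 ≤ ζ)
    (hu : 0 ≤ u) (hv : 0 ≤ v)
    (hdel : s + u = ∑ a, η a * g a - ∑ a, ζ a * p a)
    (hcut : s - v ≥ -∑ a, ζ a * pbar a) :
    (∀ (α β γ : ℝ) (lam μ : Fin A → ℝ), 0 ≤ μ →
      (∀ a, α + lam a + μ a = 0) → (∀ a, β + lam a ≤ 0) → (∀ a, γ - μ a ≤ 0) →
      α * s + β * u + γ * v + (∑ a, lam a * (η a * g a - ζ a * p a))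
        - ∑ a, μ a * (ζ a * pbar a) ≤ 0) ∧
    (∃ (α β γ : ℝ) (lam μ : Fin A → ℝ), 0 ≤ μ ∧
      (∀ a, α + lam a + μ a = 0) ∧ (∀ a, β + lam a ≤ 0) ∧ (∀ a, γ - μ a ≤ 0) ∧
      α * s + β * u + γ * v + (∑ a, lam a * (η a * g a - ζ a * p a))
        - ∑ a, μ a * (ζ a * pbar a) = 0) :=
  stmt6_general A g p pbar η ζ s u v hg hpub hη hζ hu hv hdel hcut
end

section
/- Let g, p, p̄, η, ζ ∈ R^A satisfy 0 ≤ g, 0 ≤ p ≤ p̄, η ≥ 0, ζ ≥ 0, and let s ∈ R, u ≥ 0, v ≥ 0 with s + u = ηᵀg - ζᵀp and s - v ≥ -ζᵀp̄. Then there exist vectors s', u', v' ∈ R^A with u' ≥ 0, v' ≥ 0, 1ᵀs' = s, 1ᵀu' = u, 1ᵀv' = v, s' + u' = η∘g - ζ∘p (componentwise), and s' - v' ≥ -ζ∘p̄ (componentwise). -/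
/-!
Put `L a = -(ζ a * pbar a)` and `U a = η a * g a - ζ a * p a`, so that `L ≤ U`. The box
`Icc L U` is connected, so the sum of coordinates takes on it every value between `∑ L` and
`∑ U`; since `∑ L ≤ s ≤ ∑ U`, this yields `s'`, and `u' = U - s'`. Applying the same fact to
the box `Icc 0 (s' - L)`, whose coordinate sum `s - ∑ L` is at least `v`, yields `v'`.
-/

open Finset

theorem exists_mem_Icc_sum_eq {ι : Type*} [Fintype ι] {L U : ι → ℝ} (hLU : L ≤ U) {s : ℝ}
    (hLs : ∑ i, L i ≤ s) (hsU : s ≤ ∑ i, U i) : ∃ x ∈ Set.Icc L U, ∑ i, x i = s :=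
  (convex_Icc L U).isPreconnected.intermediate_value (Set.left_mem_Icc.2 hLU)
    (Set.right_mem_Icc.2 hLU) (f := fun x => ∑ i, x i) (by fun_prop) ⟨hLs, hsU⟩

theorem stmt7_general (A : ℕ) (g p pbar η ζ : Fin A → ℝ)
    (hg : 0 ≤ g) (hpub : p ≤ pbar) (hη : 0 ≤ η) (hζ : 0 ≤ ζ)
    (s u v : ℝ) (hu : 0 ≤ u) (hv : 0 ≤ v)
    (hdel : s + u = ∑ a, η a * g a - ∑ a, ζ a * p a)
    (hcut : s - v ≥ -∑ a, ζ a * pbar a) :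
    ∃ s' u' v' : Fin A → ℝ, 0 ≤ u' ∧ 0 ≤ v' ∧
      (∑ a, s' a) = s ∧ (∑ a, u' a) = u ∧ (∑ a, v' a) = v ∧
      (∀ a, s' a + u' a = η a * g a - ζ a * p a) ∧
      (∀ a, s' a - v' a ≥ -(ζ a * pbar a)) := by
  set L : Fin A → ℝ := fun a => -(ζ a * pbar a)
  set U : Fin A → ℝ := fun a => η a * g a - ζ a * p a
  have hLU : L ≤ U := fun a => by
    have := mul_nonneg (hη a) (hg a)
    have := mul_le_mul_of_nonneg_left (hpub a) (hζ a)
    simp only [L, U]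
    linarith
  have hsumU : ∑ a, U a = s + u := by simp only [U, sum_sub_distrib, hdel]
  have hsumL : ∑ a, L a = -∑ a, ζ a * pbar a := sum_neg_distrib _
  obtain ⟨s', ⟨hLs', hs'U⟩, hs'⟩ :=
    exists_mem_Icc_sum_eq hLU (s := s) (by linarith) (by linarith)
  obtain ⟨v', ⟨hv', hv's'⟩, hsumv'⟩ := exists_mem_Icc_sum_eq (sub_nonneg.2 hLs') (s := v)
    (by simpa using hv) (by simp only [Pi.sub_apply, sum_sub_distrib, hs']; linarith)
  refine ⟨s', U - s', v', sub_nonneg.2 hs'U, hv', hs', ?_, hsumv', fun a => ?_, fun a => ?_⟩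
  · simp only [Pi.sub_apply, sum_sub_distrib, hsumU, hs']
    ring
  · simp [U]
  · linarith [show v' a ≤ s' a - L a from hv's' a]

/-- Disaggregation of collective market bids into arc-wise individual bids consistent
with the given flow decisions. -/
theorem stmt7 (A : ℕ) (g p pbar η ζ : Fin A → ℝ)
    (hg : 0 ≤ g) (hp : 0 ≤ p) (hpub : p ≤ pbar) (hη : 0 ≤ η) (hζ : 0 ≤ ζ)
    (s u v : ℝ) (hu : 0 ≤ u) (hv : 0 ≤ v)
    (hdel : s + u = ∑ a, η a * g a - ∑ a, ζ a * p a)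
    (hcut : s - v ≥ -∑ a, ζ a * pbar a) :
    ∃ s' u' v' : Fin A → ℝ, 0 ≤ u' ∧ 0 ≤ v' ∧
      (∑ a, s' a) = s ∧ (∑ a, u' a) = u ∧ (∑ a, v' a) = v ∧
      (∀ a, s' a + u' a = η a * g a - ζ a * p a) ∧
      (∀ a, s' a - v' a ≥ -(ζ a * pbar a)) :=
  stmt7_general A g p pbar η ζ hg hpub hη hζ s u v hu hv hdel hcut
end

section
/- Consider two linear programs over variables (s_t, u_t, v_t, g_t, p_t, z_t) for t = 1,...,H with identical objective Σ_t (π̃ˢ_t·Σ_a s_{t,a} + π̃ᵘ_t·Σ_a u_{t,a} + π̃ᵛ_t·Σ_a v_{t,a}) and identical constraints except that the individual problem imposes arc-wise constraints s_t + u_t = η_t∘g_t - ζ_t∘p_t and s_t - v_t ≥ -ζ_t∘p̄_t (componentwise in R^A, with vector bids s_t, u_t, v_t ∈ R^A, u_t, v_t ≥ 0), while the collective problem imposes scalar constraints s_t + u_t = η_tᵀg_t - ζ_tᵀp_t and s_t - v_t ≥ -ζ_tᵀp̄_t (with scalar bids s_t ∈ R, u_t, v_t ≥ 0); the common remaining constraints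 are 0 ≤ g_t ≤ ḡ_t, 0 ≤ p_t ≤ p̄_t, 0 ≤ z_t, w ≤ w₀ + Σ_{τ≤t} φ_τ + M(g_τ - p_τ + z_τ) ≤ w̄ for each t, and w_H-target inequality w_d ≤ w₀ + Σ_τ φ_τ + M(g_τ - p_τ + z_τ). Then the two linear programs have the same optimal value (where the objective of the individual problem is evaluated with the aggregate Σ_a s_{t,a} etc.). -/
/-!
Both programs share the physical variables `g, p, z` and all storage constraints, so it suffices
to compare, period by period, the admissible bids for fixed `g, p`. Summing arc-wise bids gives
admissible aggregate bids with the same objective. Conversely, writing `e = η∘g - ζ∘p` and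
`d = ζ∘p̄`, the aggregate constraints say `u + v ≤ ∑ (e + d)`, and every term `e + d` is
nonnegative; splitting `u` and `v` over the arcs in proportion to `e + d` gives arc-wise bids
with the same sums.
-/

open Matrix Finset

variable {ι : Type*} [Fintype ι]

theorem exists_proportional_split_of_add_le_sum {c : ι → ℝ} (hc : 0 ≤ c) {u v : ℝ}
    (hu : 0 ≤ u) (hv : 0 ≤ v) (huv : u + v ≤ ∑ a, c a) :
    ∃ u' v' : ι → ℝ, 0 ≤ u' ∧ 0 ≤ v' ∧ (∀ a, u' a + v' a ≤ c a) ∧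
      ∑ a, u' a = u ∧ ∑ a, v' a = v := by
  set T := ∑ a, c a
  have hT : 0 ≤ T := sum_nonneg fun a _ => hc a
  -- when `T = 0` both shares vanish by `x / 0 = 0`, which is right since then `u = v = 0`
  have share_sum : ∀ k, 0 ≤ k → k ≤ T → ∑ a, k / T * c a = k := by
    intro k hk hkT
    rw [← mul_sum]
    rcases hT.eq_or_lt with h0 | hpos
    · rw [← h0, div_zero, zero_mul]
      linarith
    · exact div_mul_cancel₀ k hpos.ne'
  refine ⟨fun a => u / T * c a, fun a => v / T * c a, fun a => ?_, fun a => ?_, fun a => ?_,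
    share_sum u hu (by linarith), share_sum v hv (by linarith)⟩
  · exact mul_nonneg (div_nonneg hu hT) (hc a)
  · exact mul_nonneg (div_nonneg hv hT) (hc a)
  · have hle : (u + v) / T ≤ 1 := div_le_one_of_le₀ huv hT
    calc u / T * c a + v / T * c a = (u + v) / T * c a := by ring
      _ ≤ 1 * c a := mul_le_mul_of_nonneg_right hle (hc a)
      _ = c a := one_mul _

theorem aggregate_bids {e d s u v : ι → ℝ} (hu : 0 ≤ u) (hv : 0 ≤ v)
    (hsu : ∀ a, s a + u a = e a) (hsv : ∀ a, -d a ≤ s a - v a) :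
    0 ≤ ∑ a, u a ∧ 0 ≤ ∑ a, v a ∧ ∑ a, s a + ∑ a, u a = ∑ a, e a ∧
      -∑ a, d a ≤ ∑ a, s a - ∑ a, v a := by
  refine ⟨sum_nonneg fun a _ => hu a, sum_nonneg fun a _ => hv a, ?_, ?_⟩
  · rw [← sum_add_distrib]
    exact sum_congr rfl fun a _ => hsu a
  · rw [← sum_sub_distrib, ← sum_neg_distrib]
    exact sum_le_sum fun a _ => hsv a

theorem exists_bids_of_aggregate {e d : ι → ℝ} (hed : ∀ a, 0 ≤ e a + d a) {s u v : ℝ}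
    (hu : 0 ≤ u) (hv : 0 ≤ v) (hsu : s + u = ∑ a, e a) (hsv : -∑ a, d a ≤ s - v) :
    ∃ s' u' v' : ι → ℝ, 0 ≤ u' ∧ 0 ≤ v' ∧ (∀ a, s' a + u' a = e a) ∧
      (∀ a, -d a ≤ s' a - v' a) ∧ ∑ a, s' a = s ∧ ∑ a, u' a = u ∧ ∑ a, v' a = v := by
  have huv : u + v ≤ ∑ a, (e a + d a) := by
    rw [sum_add_distrib]
    linarith
  obtain ⟨u', v', hu', hv', hle, hsum_u, hsum_v⟩ :=
    exists_proportional_split_of_add_le_sum (c := fun a => e a + d a) hed hu hv huv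
  refine ⟨e - u', u', v', hu', hv', fun a => sub_add_cancel _ _, fun a => ?_, ?_, hsum_u, hsum_v⟩
  · simp only [Pi.sub_apply]
    linarith [hle a]
  · simp only [Pi.sub_apply, sum_sub_distrib, hsum_u]
    linarith

theorem stmt8_general (H A R : ℕ)
    (πs πu πv : Fin H → ℝ)
    (η ζ gbar pbar : Fin H → Fin A → ℝ)
    (hη : ∀ t, 0 ≤ η t) (hζ : ∀ t, 0 ≤ ζ t)
    (M : Matrix (Fin R) (Fin A) ℝ)
    (φ : Fin H → Fin R → ℝ) (w0 wlo whi wd : Fin R → ℝ) :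
    sSup {x : ℝ | ∃ s u v g p z : Fin H → Fin A → ℝ,
        (∀ t, 0 ≤ u t ∧ 0 ≤ v t ∧ 0 ≤ g t ∧ g t ≤ gbar t ∧
          0 ≤ p t ∧ p t ≤ pbar t ∧ 0 ≤ z t) ∧
        (∀ t a, s t a + u t a = η t a * g t a - ζ t a * p t a) ∧
        (∀ t a, s t a - v t a ≥ -(ζ t a * pbar t a)) ∧
        (∀ t r, wlo r ≤ w0 r + (∑ τ ∈ univ.filter (· ≤ t),
            (φ τ r + M.mulVec (g τ - p τ + z τ) r)) ∧
          w0 r + (∑ τ ∈ univ.filter (· ≤ t),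
            (φ τ r + M.mulVec (g τ - p τ + z τ) r)) ≤ whi r) ∧
        (∀ r, wd r ≤ w0 r + ∑ τ, (φ τ r + M.mulVec (g τ - p τ + z τ) r)) ∧
        x = ∑ t, (πs t * ∑ a, s t a + πu t * ∑ a, u t a + πv t * ∑ a, v t a)}
    = sSup {x : ℝ | ∃ (s u v : Fin H → ℝ) (g p z : Fin H → Fin A → ℝ),
        (∀ t, 0 ≤ u t ∧ 0 ≤ v t ∧ 0 ≤ g t ∧ g t ≤ gbar t ∧
          0 ≤ p t ∧ p t ≤ pbar t ∧ 0 ≤ z t) ∧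
        (∀ t, s t + u t = ∑ a, η t a * g t a - ∑ a, ζ t a * p t a) ∧
        (∀ t, s t - v t ≥ -∑ a, ζ t a * pbar t a) ∧
        (∀ t r, wlo r ≤ w0 r + (∑ τ ∈ univ.filter (· ≤ t),
            (φ τ r + M.mulVec (g τ - p τ + z τ) r)) ∧
          w0 r + (∑ τ ∈ univ.filter (· ≤ t),
            (φ τ r + M.mulVec (g τ - p τ + z τ) r)) ≤ whi r) ∧
        (∀ r, wd r ≤ w0 r + ∑ τ, (φ τ r + M.mulVec (g τ - p τ + z τ) r)) ∧
        x = ∑ t, (πs t * s t + πu t * u t + πv t * v t)} := by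
  congr 1
  ext x
  constructor
  · rintro ⟨s, u, v, g, p, z, hbox, hsu, hsv, hw, hwd, rfl⟩
    have hagg t := aggregate_bids (hbox t).1 (hbox t).2.1 (hsu t) (hsv t)
    refine ⟨fun t => ∑ a, s t a, fun t => ∑ a, u t a, fun t => ∑ a, v t a, g, p, z,
      fun t => ⟨(hagg t).1, (hagg t).2.1, (hbox t).2.2⟩, fun t => ?_, fun t => (hagg t).2.2.2,
      hw, hwd, rfl⟩
    rw [(hagg t).2.2.1, sum_sub_distrib]
  · rintro ⟨s, u, v, g, p, z, hbox, hsu, hsv, hw, hwd, rfl⟩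
    have hed t a : 0 ≤ (η t a * g t a - ζ t a * p t a) + ζ t a * pbar t a := by
      have hgen_nonneg : 0 ≤ η t a * g t a := mul_nonneg (hη t a) ((hbox t).2.2.1 a)
      have hp_le : ζ t a * p t a ≤ ζ t a * pbar t a :=
        mul_le_mul_of_nonneg_left ((hbox t).2.2.2.2.2.1 a) (hζ t a)
      linarith
    choose s' u' v' hu' hv' hsu' hsv' hs hu hv using fun t =>
      exists_bids_of_aggregate (hed t) (hbox t).1 (hbox t).2.1
        ((hsu t).trans (sum_sub_distrib ..).symm) (hsv t)
    exact ⟨s', u', v', g, p, z, fun t => ⟨hu' t, hv' t, (hbox t).2.2⟩, hsu', hsv', hw, hwd,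
      by simp only [hs, hu, hv]⟩

/-- The reduced individual trading LP (arc-wise bids) and the reduced collective
trading LP (aggregate bids) have the same optimal value. -/
theorem stmt8 (H A R : ℕ)
    (πs πu πv : Fin H → ℝ)
    (η ζ gbar pbar : Fin H → Fin A → ℝ)
    (hη : ∀ t, 0 ≤ η t) (hζ : ∀ t, 0 ≤ ζ t)
    (hgbar : ∀ t, 0 ≤ gbar t) (hpbar : ∀ t, 0 ≤ pbar t)
    (M : Matrix (Fin R) (Fin A) ℝ)
    (φ : Fin H → Fin R → ℝ) (w0 wlo whi wd : Fin R → ℝ) :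
    sSup {x : ℝ | ∃ s u v g p z : Fin H → Fin A → ℝ,
        (∀ t, 0 ≤ u t ∧ 0 ≤ v t ∧ 0 ≤ g t ∧ g t ≤ gbar t ∧
          0 ≤ p t ∧ p t ≤ pbar t ∧ 0 ≤ z t) ∧
        (∀ t a, s t a + u t a = η t a * g t a - ζ t a * p t a) ∧
        (∀ t a, s t a - v t a ≥ -(ζ t a * pbar t a)) ∧
        (∀ t r, wlo r ≤ w0 r + (∑ τ ∈ univ.filter (· ≤ t),
            (φ τ r + M.mulVec (g τ - p τ + z τ) r)) ∧
          w0 r + (∑ τ ∈ univ.filter (· ≤ t),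
            (φ τ r + M.mulVec (g τ - p τ + z τ) r)) ≤ whi r) ∧
        (∀ r, wd r ≤ w0 r + ∑ τ, (φ τ r + M.mulVec (g τ - p τ + z τ) r)) ∧
        x = ∑ t, (πs t * ∑ a, s t a + πu t * ∑ a, u t a + πv t * ∑ a, v t a)}
    = sSup {x : ℝ | ∃ (s u v : Fin H → ℝ) (g p z : Fin H → Fin A → ℝ),
        (∀ t, 0 ≤ u t ∧ 0 ≤ v t ∧ 0 ≤ g t ∧ g t ≤ gbar t ∧
          0 ≤ p t ∧ p t ≤ pbar t ∧ 0 ≤ z t) ∧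
        (∀ t, s t + u t = ∑ a, η t a * g t a - ∑ a, ζ t a * p t a) ∧
        (∀ t, s t - v t ≥ -∑ a, ζ t a * pbar t a) ∧
        (∀ t r, wlo r ≤ w0 r + (∑ τ ∈ univ.filter (· ≤ t),
            (φ τ r + M.mulVec (g τ - p τ + z τ) r)) ∧
          w0 r + (∑ τ ∈ univ.filter (· ≤ t),
            (φ τ r + M.mulVec (g τ - p τ + z τ) r)) ≤ whi r) ∧
        (∀ r, wd r ≤ w0 r + ∑ τ, (φ τ r + M.mulVec (g τ - p τ + z τ) r)) ∧
        x = ∑ t, (πs t * s t + πu t * u t + πv t * v t)} :=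
  stmt8_general H A R πs πu πv η ζ gbar pbar hη hζ M φ w0 wlo whi wd
end

section
/- Let (Ω, F, P) be a probability space and let ρᵘ, ρᵛ : Ω → {0,1} be random variables with ρᵘρᵛ = 0 almost surely and P[ρᵘ = 0, ρᵛ = 1] > 0. Suppose real numbers s, u, v and random variables G, Pm with G ≥ 0 a.s. and Pm ≤ p̄ a.s. (p̄ ∈ R) and positive reals η, ζ satisfy s + ρᵘu - ρᵛv = η·G - ζ·Pm almost surely. Then s - v ≥ -ζ·p̄. -/
/-! On the event `{ρᵘ = 0, ρᵛ = 1}` the delivery equation reads `s - v = η G - ζ Pm`, and its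
right-hand side is at least `-ζ p̄`. Since the event has positive probability, it contains a point
where all the almost-sure hypotheses hold simultaneously. -/

open MeasureTheory

theorem delivery_lower_bound {s v η ζ g p pbar : ℝ} (hη : 0 ≤ η) (hζ : 0 ≤ ζ)
    (hg : 0 ≤ g) (hp : p ≤ pbar) (hdel : s - v = η * g - ζ * p) :
    s - v ≥ -(ζ * pbar) := by
  have hηg : 0 ≤ η * g := mul_nonneg hη hg
  have hζp : ζ * p ≤ ζ * pbar := mul_le_mul_of_nonneg_left hp hζ
  linarith

theorem stmt11_general {Ω : Type*} [MeasurableSpace Ω] (μ : Measure Ω)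
    (ρu ρv : Ω → ℝ)
    (hpos : 0 < μ {ω | ρu ω = 0 ∧ ρv ω = 1})
    (s u v pbar η ζ : ℝ) (hη : 0 < η) (hζ : 0 < ζ)
    (G Pm : Ω → ℝ) (hG : ∀ᵐ ω ∂μ, 0 ≤ G ω) (hPm : ∀ᵐ ω ∂μ, Pm ω ≤ pbar)
    (hdel : ∀ᵐ ω ∂μ, s + ρu ω * u - ρv ω * v = η * G ω - ζ * Pm ω) :
    s - v ≥ -(ζ * pbar) := by
  have hall : ∀ᵐ ω ∂μ, 0 ≤ G ω ∧ Pm ω ≤ pbar ∧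
      s + ρu ω * u - ρv ω * v = η * G ω - ζ * Pm ω := by
    filter_upwards [hG, hPm, hdel] with ω hGω hPmω hdelω using ⟨hGω, hPmω, hdelω⟩
  obtain ⟨ω, ⟨hρuω, hρvω⟩, hGω, hPmω, hdelω⟩ :=
    Measure.exists_mem_of_measure_ne_zero_of_ae hpos.ne' (ae_restrict_of_ae hall)
  rw [hρuω, hρvω, zero_mul, add_zero, one_mul] at hdelω
  exact delivery_lower_bound hη.le hζ.le hGω hPmω hdelω

/-- Probabilistic valid-cut: if the energy delivery equation holds almost surely and
the reserve-down activation event `{ρᵘ = 0, ρᵛ = 1}` has positive probability, then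
`s - v ≥ -ζ·p̄`. -/
theorem stmt11 {Ω : Type*} [MeasurableSpace Ω] (μ : Measure Ω) [IsProbabilityMeasure μ]
    (ρu ρv : Ω → ℝ)
    (hρu : ∀ᵐ ω ∂μ, ρu ω ∈ ({0, 1} : Set ℝ)) (hρv : ∀ᵐ ω ∂μ, ρv ω ∈ ({0, 1} : Set ℝ))
    (hexcl : ∀ᵐ ω ∂μ, ρu ω * ρv ω = 0)
    (hpos : 0 < μ {ω | ρu ω = 0 ∧ ρv ω = 1})
    (s u v pbar η ζ : ℝ) (hη : 0 < η) (hζ : 0 < ζ)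
    (G Pm : Ω → ℝ) (hG : ∀ᵐ ω ∂μ, 0 ≤ G ω) (hPm : ∀ᵐ ω ∂μ, Pm ω ≤ pbar)
    (hdel : ∀ᵐ ω ∂μ, s + ρu ω * u - ρv ω * v = η * G ω - ζ * Pm ω) :
    s - v ≥ -(ζ * pbar) :=
  stmt11_general μ ρu ρv hpos s u v pbar η ζ hη hζ G Pm hG hPm hdel
end

section
/- Let η, ζ, ḡ, p̄ ∈ R^A be nonnegative, g, p ∈ R^A with 0 ≤ g and 0 ≤ p ≤ p̄, and s ∈ R, u ≥ 0, v ≥ 0 with s + u = ηᵀg - ζᵀp and v - s - ζᵀp̄ ≤ 0. Let α, β, γ ∈ R, λ ∈ R^A, μ ≥ 0 satisfy α1 + λ + μ = 0, β1 + λ ≤ 0, γ1 - μ ≤ 0, and set μ̲ = min_a μ_a. Then α·s + β·u + γ·v + λᵀ(η∘g - ζ∘p) - μᵀ(ζ∘p̄) ≤ (β - α - μ̲)·u + μ̲·(v - s - ζᵀp̄) ≤ 0. -/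
/-!
Substituting `lam a = -α - μ a` turns the `lam`-sum into `-α (s + u) - ∑ μ a (η a g a - ζ a p a)`,
so the dual objective equals `(β - α) u + γ v - ∑ μ a (η a g a + ζ a (pbar a - p a))`.
Each summand weight `η a g a + ζ a (pbar a - p a)` is nonnegative, so replacing `μ` by its minimum
`μlo` and `γ` by `μlo ≥ γ` only increases the objective; the energy-delivery identity then collapses
the weights to `s + u + ∑ ζ a pbar a`. The resulting bound is nonpositive because every coefficient
has the opposite sign of the term it multiplies.
-/

open Finset

variable {ι : Type*} [Fintype ι]

theorem sum_mul_eq_of_add_add_eq_zero {R : Type*} [CommRing R] {α : R} {lam μ x : ι → R}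
    (h : ∀ a, α + lam a + μ a = 0) :
    ∑ a, lam a * x a = -(α * ∑ a, x a) - ∑ a, μ a * x a := by
  have hlam : ∀ a, lam a = -α - μ a := fun a => by linear_combination h a
  simp only [hlam, sub_mul, neg_mul, sum_sub_distrib, sum_neg_distrib, mul_sum]

theorem mul_sum_le_sum_mul_of_le {R : Type*} [Semiring R] [PartialOrder R] [IsOrderedRing R]
    {m : R} {μ w : ι → R} (hw : 0 ≤ w) (hm : ∀ a, m ≤ μ a) :
    m * ∑ a, w a ≤ ∑ a, μ a * w a := by
  rw [mul_sum]
  exact sum_le_sum fun a _ => mul_le_mul_of_nonneg_right (hm a) (hw a)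

theorem dual_objective_le {η ζ pbar g p : ι → ℝ} (hη : 0 ≤ η) (hζ : 0 ≤ ζ) (hg : 0 ≤ g)
    (hpub : p ≤ pbar) {s u v : ℝ} (hv : 0 ≤ v)
    (hdel : s + u = ∑ a, η a * g a - ∑ a, ζ a * p a)
    {α β γ μlo : ℝ} {lam μ : ι → ℝ} (h1 : ∀ a, α + lam a + μ a = 0) (hγ : γ ≤ μlo)
    (hlb : ∀ a, μlo ≤ μ a) :
    α * s + β * u + γ * v + (∑ a, lam a * (η a * g a - ζ a * p a))
        - ∑ a, μ a * (ζ a * pbar a)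
      ≤ (β - α - μlo) * u + μlo * (v - s - ∑ a, ζ a * pbar a) := by
  have hweight : 0 ≤ fun a => η a * g a - ζ a * p a + ζ a * pbar a := fun a => by
    dsimp only [Pi.zero_apply]
    linarith [mul_nonneg (hη a) (hg a), mul_nonneg (hζ a) (sub_nonneg.2 (hpub a))]
  have hmin := mul_sum_le_sum_mul_of_le hweight hlb
  simp only [mul_add, sum_add_distrib, sum_sub_distrib, ← hdel] at hmin
  have hlam := sum_mul_eq_of_add_add_eq_zero (x := fun a => η a * g a - ζ a * p a) h1
  rw [sum_sub_distrib, ← hdel] at hlam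
  linarith [mul_le_mul_of_nonneg_right hγ hv]

theorem stmt15_general (A : ℕ) (η ζ pbar : Fin A → ℝ)
    (hη : 0 ≤ η) (hζ : 0 ≤ ζ)
    (g p : Fin A → ℝ) (hg : 0 ≤ g) (hpub : p ≤ pbar)
    (s u v : ℝ) (hu : 0 ≤ u) (hv : 0 ≤ v)
    (hdel : s + u = ∑ a, η a * g a - ∑ a, ζ a * p a)
    (hcut : v - s - ∑ a, ζ a * pbar a ≤ 0)
    (α β γ : ℝ) (lam μ : Fin A → ℝ) (hμ : 0 ≤ μ)
    (h1 : ∀ a, α + lam a + μ a = 0) (h2 : ∀ a, β + lam a ≤ 0) (h3 : ∀ a, γ - μ a ≤ 0)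
    (μlo : ℝ) (hlb : ∀ a, μlo ≤ μ a) (hmem : ∃ a, μ a = μlo) :
    α * s + β * u + γ * v + (∑ a, lam a * (η a * g a - ζ a * p a))
        - ∑ a, μ a * (ζ a * pbar a)
      ≤ (β - α - μlo) * u + μlo * (v - s - ∑ a, ζ a * pbar a) ∧
    (β - α - μlo) * u + μlo * (v - s - ∑ a, ζ a * pbar a) ≤ 0 := by
  obtain ⟨a₀, ha₀⟩ := hmem
  have hμlo : 0 ≤ μlo := ha₀ ▸ hμ a₀
  have hγ : γ ≤ μlo := by linarith [h3 a₀]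
  have hβα : β - α - μlo ≤ 0 := by linarith [h1 a₀, h2 a₀]
  exact ⟨dual_objective_le hη hζ hg hpub hv hdel h1 hγ hlb,
    add_nonpos (mul_nonpos_of_nonpos_of_nonneg hβα hu) (mul_nonpos_of_nonneg_of_nonpos hμlo hcut)⟩

/-- Full chain of inequalities bounding the dual objective in Proposition 11. -/
theorem stmt15 (A : ℕ) (η ζ gbar pbar : Fin A → ℝ)
    (hη : 0 ≤ η) (hζ : 0 ≤ ζ) (hgbar : 0 ≤ gbar) (hpbar : 0 ≤ pbar)
    (g p : Fin A → ℝ) (hg : 0 ≤ g) (hp : 0 ≤ p) (hpub : p ≤ pbar)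
    (s u v : ℝ) (hu : 0 ≤ u) (hv : 0 ≤ v)
    (hdel : s + u = ∑ a, η a * g a - ∑ a, ζ a * p a)
    (hcut : v - s - ∑ a, ζ a * pbar a ≤ 0)
    (α β γ : ℝ) (lam μ : Fin A → ℝ) (hμ : 0 ≤ μ)
    (h1 : ∀ a, α + lam a + μ a = 0) (h2 : ∀ a, β + lam a ≤ 0) (h3 : ∀ a, γ - μ a ≤ 0)
    (μlo : ℝ) (hlb : ∀ a, μlo ≤ μ a) (hmem : ∃ a, μ a = μlo) :
    α * s + β * u + γ * v + (∑ a, lam a * (η a * g a - ζ a * p a))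
        - ∑ a, μ a * (ζ a * pbar a)
      ≤ (β - α - μlo) * u + μlo * (v - s - ∑ a, ζ a * pbar a) ∧
    (β - α - μlo) * u + μlo * (v - s - ∑ a, ζ a * pbar a) ≤ 0 :=
  stmt15_general A η ζ pbar hη hζ g p hg hpub s u v hu hv hdel hcut α β γ lam μ hμ h1 h2 h3 μlo hlb
    hmem
end
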